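/- arXiv:math/0012188 — 2 statements merged into one kernel-verified Lean document; each statement's English description precedes it below -/
import Mathlib

section
/- For 0 < a < b < 1 with a, b ≤ exp(−4), one has u(2) ≤ 2·u(1), where u(x) = (log x − log b)/(log x − log a); i.e. (log 2 − log b)/(log 2 − log a) ≤ 2·(−log b)/(−log a). -/
/-!
With `x = log 2`, `y = -log b`, `s = -log a` the claim reads `(x + y) / (x + s) ≤ 2 * y / s`.
Since `b ≤ exp (-4) < 1/2` we have `x ≤ y`, so the numerator is at most `2 * y`, while the
denominator is at least `s > 0`.
-/

theorem add_div_add_le_two_mul_div {x y s : ℝ} (hx : 0 ≤ x) (hxy : x ≤ y) (hs : 0 < s) :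
    (x + y) / (x + s) ≤ 2 * (y / s) := by
  rw [mul_div_assoc', two_mul]
  exact div_le_div₀ (by linarith) (by linarith) hs (by linarith)

theorem log_two_le_neg_log_of_le_exp_neg_four {b : ℝ} (hb₀ : 0 < b) (hb : b ≤ Real.exp (-4)) :
    Real.log 2 ≤ -Real.log b := by
  have hlog_b : Real.log b ≤ -4 := by
    simpa using Real.log_le_log hb₀ hb
  linarith [Real.log_two_lt_d9]

theorem u_two_le_two_u_one (a b : ℝ) (ha : 0 < a) (hab : a < b)
    (hb : b ≤ Real.exp (-4)) :
    (Real.log 2 - Real.log b) / (Real.log 2 - Real.log a) ≤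
      2 * ((-Real.log b) / (-Real.log a)) := by
  have hb₀ : 0 < b := ha.trans hab
  have hlog2_le : Real.log 2 ≤ -Real.log b := log_two_le_neg_log_of_le_exp_neg_four hb₀ hb
  have hlog_a : 0 < -Real.log a := by
    linarith [Real.log_lt_log ha hab, Real.log_pos one_lt_two]
  simpa only [sub_eq_add_neg] using
    add_div_add_le_two_mul_div (Real.log_pos one_lt_two).le hlog2_le hlog_a
end

section
/- Let x_n = 1/n⁵, y_n = (x_n + x_{n+1})/2, and r_n = exp(−n¹⁹). Then sup_m Σ_{n≥2} ( n⁵/(|y_m − x_n|²·(−log r_n)) + n⁵·r_n²/((|y_m − x_n|² − r_n²)²) ) < ∞, where the supremum is over m ≥ 2. -/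
open Real

noncomputable def xseq (n : ℕ) : ℝ := 1 / (n : ℝ) ^ 5
noncomputable def yseq (n : ℕ) : ℝ := (xseq n + xseq (n + 1)) / 2
noncomputable def rseq (n : ℕ) : ℝ := Real.exp (-(n : ℝ) ^ 19)

noncomputable def term (m n : ℕ) : ℝ :=
  (n : ℝ) ^ 5 / (|yseq m - xseq n| ^ 2 * (-Real.log (rseq n))) +
  (n : ℝ) ^ 5 * (rseq n) ^ 2 / ((|yseq m - xseq n| ^ 2 - (rseq n) ^ 2) ^ 2)

/-! Each `y_m` lies midway between consecutive points `x_{m+1} < x_m`, and the gaps satisfy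
`x_k - x_{k+1} ≥ 1/(8k⁶)`, so `|y_m - x_n| ≥ 1/(16n⁶)` uniformly in `m`. With `-log r_n = n¹⁹` and
`r_n² ≤ 2⁻¹⁸ n⁻³¹` (from `exp x ≥ x⁴/4!`), both summands of `term m n` are then at most a constant
times `1/n²`, and the sums are dominated by `257 ∑ 1/n²`. -/

lemma xseq_le_xseq {a b : ℕ} (ha : 1 ≤ a) (hab : a ≤ b) : xseq b ≤ xseq a := by
  have ha' : (0 : ℝ) < a := by exact_mod_cast ha
  unfold xseq
  gcongr

lemma one_div_sixteen_mul_pow_six_le_half_gap {k : ℕ} (hk : 1 ≤ k) :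
    1 / (16 * (k : ℝ) ^ 6) ≤ (xseq k - xseq (k + 1)) / 2 := by
  have hk' : (1 : ℝ) ≤ k := by exact_mod_cast hk
  have hkey : ((k : ℝ) + 1) ^ 5 ≤ 8 * k * (((k : ℝ) + 1) ^ 5 - (k : ℝ) ^ 5) := by
    nlinarith [one_le_pow₀ (n := 2) hk', one_le_pow₀ (n := 3) hk', one_le_pow₀ (n := 4) hk',
      one_le_pow₀ (n := 5) hk']
  unfold xseq
  push_cast
  rw [div_sub_div _ _ (by positivity) (by positivity), div_div,
    div_le_div_iff₀ (by positivity) (by positivity)]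
  nlinarith [pow_pos (by positivity : (0 : ℝ) < k) 5]

lemma yseq_le_yseq {a b : ℕ} (ha : 1 ≤ a) (hab : a ≤ b) : yseq b ≤ yseq a := by
  unfold yseq
  linarith [xseq_le_xseq ha hab, xseq_le_xseq (Nat.le_succ_of_le ha) (Nat.succ_le_succ hab)]

lemma one_div_sixteen_mul_pow_six_le_abs_yseq_sub_xseq {m n : ℕ} (hm : 1 ≤ m) (hn : 1 ≤ n) :
    1 / (16 * (n : ℝ) ^ 6) ≤ |yseq m - xseq n| := by
  rcases le_or_gt n m with hnm | hmn
  · have hy : yseq m ≤ yseq n := yseq_le_yseq hn hnm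
    have hgap := one_div_sixteen_mul_pow_six_le_half_gap hn
    rw [abs_sub_comm]
    refine le_trans ?_ (le_abs_self _)
    unfold yseq at hy ⊢
    linarith
  · have hx : xseq n ≤ xseq (m + 1) := xseq_le_xseq (by omega) hmn
    have hgap := one_div_sixteen_mul_pow_six_le_half_gap hm
    have hmn' : 1 / (16 * (n : ℝ) ^ 6) ≤ 1 / (16 * (m : ℝ) ^ 6) := by
      have : (1 : ℝ) ≤ m := by exact_mod_cast hm
      gcongr
    refine le_trans ?_ (le_abs_self _)
    unfold yseq
    linarith

lemma neg_log_rseq (n : ℕ) : -Real.log (rseq n) = (n : ℝ) ^ 19 := by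
  simp [rseq]

lemma rseq_sq_le {n : ℕ} (hn : 2 ≤ n) : rseq n ^ 2 ≤ 1 / (2 ^ 18 * (n : ℝ) ^ 31) := by
  have hn' : (2 : ℝ) ≤ n := by exact_mod_cast hn
  have hexp : 2 ^ 18 * (n : ℝ) ^ 31 ≤ exp (2 * (n : ℝ) ^ 19) := by
    refine le_trans ?_ (pow_div_factorial_le_exp _ (by positivity) 4)
    have h45 : (2 : ℝ) ^ 45 ≤ (n : ℝ) ^ 45 := pow_le_pow_left₀ (by norm_num) hn' 45
    simp only [Nat.factorial]
    nlinarith [pow_pos (by positivity : (0 : ℝ) < n) 31]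
  have hsq : rseq n ^ 2 = (exp (2 * (n : ℝ) ^ 19))⁻¹ := by
    rw [rseq, ← exp_nat_mul, ← exp_neg]
    ring_nf
  rw [hsq, one_div]
  exact inv_anti₀ (by positivity) hexp

lemma term_nonneg (m n : ℕ) : 0 ≤ term m n := by
  unfold term
  rw [neg_log_rseq]
  positivity

lemma first_summand_le {N d : ℝ} (hN : 0 < N) (hd : 1 / (256 * N ^ 12) ≤ d) :
    N ^ 5 / (d * N ^ 19) ≤ 256 / N ^ 2 := by
  have hd0 : 0 < d := lt_of_lt_of_le (by positivity) hd
  rw [div_le_iff₀ (by positivity)] at hd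
  rw [div_le_div_iff₀ (by positivity) (by positivity)]
  calc N ^ 5 * N ^ 2 = N ^ 7 * 1 := by ring
    _ ≤ N ^ 7 * (d * (256 * N ^ 12)) := by gcongr
    _ = 256 * (d * N ^ 19) := by ring

lemma second_summand_le {N d r : ℝ} (hN : 1 ≤ N) (hd : 1 / (256 * N ^ 12) ≤ d) (hr0 : 0 ≤ r)
    (hr : r ≤ 1 / (2 ^ 18 * N ^ 31)) :
    N ^ 5 * r / (d - r) ^ 2 ≤ 1 / N ^ 2 := by
  have hN0 : 0 < N := by linarith
  have hr' : r ≤ 1 / (512 * N ^ 12) := by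
    refine hr.trans (one_div_le_one_div_of_le (by positivity) ?_)
    nlinarith [pow_le_pow_right₀ hN (show 12 ≤ 31 by norm_num), pow_pos hN0 12]
  have hgap : 1 / (512 * N ^ 12) ≤ d - r := by
    have : 1 / (256 * N ^ 12) = 2 * (1 / (512 * N ^ 12)) := by field_simp; ring
    linarith
  calc N ^ 5 * r / (d - r) ^ 2 ≤ N ^ 5 * r / (1 / (512 * N ^ 12)) ^ 2 := by gcongr
    _ = 2 ^ 18 * N ^ 29 * r := by field_simp; ring
    _ ≤ 2 ^ 18 * N ^ 29 * (1 / (2 ^ 18 * N ^ 31)) := by gcongr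
    _ = 1 / N ^ 2 := by field_simp

lemma term_le {m n : ℕ} (hm : 1 ≤ m) (hn : 2 ≤ n) : term m n ≤ 257 / (n : ℝ) ^ 2 := by
  have hn1 : (1 : ℝ) ≤ n := by exact_mod_cast (by omega : 1 ≤ n)
  have hd : 1 / (256 * (n : ℝ) ^ 12) ≤ |yseq m - xseq n| ^ 2 := by
    calc 1 / (256 * (n : ℝ) ^ 12) = (1 / (16 * (n : ℝ) ^ 6)) ^ 2 := by ring
      _ ≤ |yseq m - xseq n| ^ 2 := by
        gcongr
        exact one_div_sixteen_mul_pow_six_le_abs_yseq_sub_xseq hm (by omega)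
  rw [term, neg_log_rseq]
  exact (add_le_add (first_summand_le (by positivity) hd)
    (second_summand_le hn1 hd (sq_nonneg _) (rseq_sq_le hn))).trans_eq (by ring)

theorem uniform_sum_bound :
    ∃ M : ℝ, ∀ m : ℕ, 2 ≤ m →
      Summable (fun n : ℕ => term m (n + 2)) ∧
      (∑' n : ℕ, term m (n + 2)) ≤ M := by
  have hmajorant : Summable (fun n : ℕ => 257 / ((n + 2 : ℕ) : ℝ) ^ 2) := by
    have := (Real.summable_one_div_nat_pow.mpr one_lt_two).mul_left 257
    simpa only [mul_one_div] using (summable_nat_add_iff 2).mpr this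
  refine ⟨∑' n : ℕ, 257 / ((n + 2 : ℕ) : ℝ) ^ 2, fun m hm => ?_⟩
  have hle (n : ℕ) : term m (n + 2) ≤ 257 / ((n + 2 : ℕ) : ℝ) ^ 2 :=
    term_le (by omega) (by omega)
  have hsum := hmajorant.of_nonneg_of_le (fun n => term_nonneg m (n + 2)) hle
  exact ⟨hsum, hsum.tsum_le_tsum hle hmajorant⟩
end
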